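/- Let β > 0, θ ∈ ℝ, and n_θ = (cos θ, sin θ) ∈ ℝ². For any x̂ ∈ ℝ² and θ̂ ∈ ℝ, the supremum over all pairs (a, b) with 0 ≤ b ≤ a ≤ 1 of the quantity (max(a·⟨x̂, n_θ⟩ + b·θ̂/β, 0))² equals max{ (max(⟨x̂, n_θ⟩ + θ̂/β, 0))², (max(⟨x̂, n_θ⟩, 0))² }. Consequently, the Hamiltonian of the convexity-constrained Dubins metric is 2𝕳(x̂, θ̂) = max{⟨(x̂,θ̂), q₊⟩₊², ⟨x̂, n_θ⟩₊²}, where q₊ = (n_θ, 1/β). -/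

import Mathlib

/-! The quantity `a * c + b * d` is affine in `(a, b)`, so on the triangle `0 ≤ b ≤ a ≤ 1` it is
bounded by its values `c + d`, `c`, `0` at the vertices. Since `x ↦ (max x 0) ^ 2` is monotone and
minimal at `0`, the supremum of its composite is attained at `(1, 1)` or `(1, 0)`. -/

lemma mul_add_mul_le_max_vertices {a b c d : ℝ} (hb : 0 ≤ b) (hba : b ≤ a) (ha : a ≤ 1) :
    a * c + b * d ≤ max (max (c + d) c) 0 := by
  set M := max (max (c + d) c) 0
  have hM : 0 ≤ M := le_max_right _ _
  calc a * c + b * d = b * (c + d) + (a - b) * c := by ring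
    _ ≤ b * M + (a - b) * M := by
        have hcd : c + d ≤ M := (le_max_left _ _).trans (le_max_left _ _)
        have hc : c ≤ M := (le_max_right _ _).trans (le_max_left _ _)
        gcongr
    _ = a * M := by ring
    _ ≤ M := mul_le_of_le_one_left hM ha

lemma isGreatest_triangle_image {α : Type*} [LinearOrder α] {f : ℝ → α} (hf : Monotone f)
    (hf0 : ∀ x, f 0 ≤ f x) (c d : ℝ) :
    IsGreatest {v | ∃ a b : ℝ, 0 ≤ b ∧ b ≤ a ∧ a ≤ 1 ∧ v = f (a * c + b * d)}
      (max (f (c + d)) (f c)) := by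
  constructor
  · rcases max_choice (f (c + d)) (f c) with h | h <;> rw [h]
    exacts [⟨1, 1, zero_le_one, le_rfl, le_rfl, by simp⟩, ⟨1, 0, le_rfl, zero_le_one, le_rfl, by simp⟩]
  · rintro v ⟨a, b, hb, hba, ha, rfl⟩
    calc f (a * c + b * d) ≤ f (max (max (c + d) c) 0) := hf (mul_add_mul_le_max_vertices hb hba ha)
      _ = max (max (f (c + d)) (f c)) (f 0) := by rw [hf.map_max, hf.map_max]
      _ = max (f (c + d)) (f c) := max_eq_left ((hf0 c).trans (le_max_right _ _))

lemma monotone_sq_max_zero : Monotone fun x : ℝ => (max x 0) ^ 2 :=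
  fun _ _ h => pow_le_pow_left₀ (le_max_right _ _) (max_le_max_right 0 h) 2

theorem stmt_2 (β θ : ℝ) (xhat : ℝ × ℝ) (θhat : ℝ) :
    IsLUB {v : ℝ | ∃ a b : ℝ, 0 ≤ b ∧ b ≤ a ∧ a ≤ 1 ∧
        v = (max (a * (xhat.1 * Real.cos θ + xhat.2 * Real.sin θ)
              + b * (θhat / β)) 0)^2}
      (max ((max ((xhat.1 * Real.cos θ + xhat.2 * Real.sin θ) + θhat / β) 0)^2)
           ((max (xhat.1 * Real.cos θ + xhat.2 * Real.sin θ) 0)^2)) :=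
  (isGreatest_triangle_image monotone_sq_max_zero (fun x => by simp) _ _).isLUB
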